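/- Let V be a complex inner product space of dimension n ≥ 3, let R be a Kähler curvature-type tensor on V, and let φ ∈ ℝ. Assume that for every complex 3-dimensional subspace Σ ⊆ V, every orthonormal basis (E_1,E_2,E_3) of Σ, and every unit vector v ∈ Σ one has Σ_{j=1}^3 R(v,v̄,E_j,Ē_j) − R(v,v̄,v,v̄) ≥ φ. Then for every orthonormal triple (e_1,e_2,e_l) in V, the real number R_{1 1̄ 1 1̄} + R_{2 2̄ 2 2̄} − R_{1 2̄ 1 2̄} − R_{2 1̄ 2 1̄} + 2(R_{1 1̄ l l̄} + R_{2 2̄ l l̄}) is at least 4φ. -/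

import Mathlib

open MeasureTheory

/-- A Kähler curvature-type tensor on a complex vector space `V`: a map
`R : V × V × V × V → ℂ` that is `ℂ`-linear in the first and third arguments,
conjugate-linear in the second and fourth arguments, and satisfies the Kähler
symmetries `R(X,Y,Z,W) = R(Z,Y,X,W)`, `R(X,Y,Z,W) = R(X,W,Z,Y)` and
`conj (R(X,Y,Z,W)) = R(Y,X,W,Z)`. -/
structure IsKahlerCurvatureTensor {V : Type*} [AddCommGroup V] [Module ℂ V]
    (R : V → V → V → V → ℂ) : Prop where
  map_add₁ : ∀ x x' y z w, R (x + x') y z w = R x y z w + R x' y z w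
  map_smul₁ : ∀ (a : ℂ) (x y z w : V), R (a • x) y z w = a * R x y z w
  map_add₂ : ∀ x y y' z w, R x (y + y') z w = R x y z w + R x y' z w
  map_smul₂ : ∀ (a : ℂ) (x y z w : V), R x (a • y) z w = starRingEnd ℂ a * R x y z w
  map_add₃ : ∀ x y z z' w, R x y (z + z') w = R x y z w + R x y z' w
  map_smul₃ : ∀ (a : ℂ) (x y z w : V), R x y (a • z) w = a * R x y z w
  map_add₄ : ∀ x y z w w', R x y z (w + w') = R x y z w + R x y z w'
  map_smul₄ : ∀ (a : ℂ) (x y z w : V), R x y z (a • w) = starRingEnd ℂ a * R x y z w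
  symm₁₃ : ∀ x y z w, R x y z w = R z y x w
  symm₂₄ : ∀ x y z w, R x y z w = R x w z y
  conj_symm : ∀ x y z w, starRingEnd ℂ (R x y z w) = R y x w z

/-!
Average the hypothesis over the two unit vectors `(e₁ ± e₂)/√2` of `Σ = span (e₁, e₂, e_l)`.
Sesquilinearity in the first pair of slots gives
`R(v₊,v̄₊,E,Ē) + R(v₋,v̄₋,E,Ē) = R(e₁,ē₁,E,Ē) + R(e₂,ē₂,E,Ē)`, while in the quartic term only
the monomials of even degree in `e₂` survive; by the Kähler symmetries they reduce to
`R_{11̄11̄}, R_{22̄22̄}, R_{11̄22̄}, R_{12̄12̄}, R_{21̄21̄}`. The terms `R_{11̄22̄}` cancel, and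
twice `Ric^⊥_Σ(v₊) + Ric^⊥_Σ(v₋)` is exactly the displayed combination.
-/

/-- `Ric^⊥_Σ(v) = Ric_Σ(v, v̄) - R(v, v̄, v, v̄)`, where `E` is an orthonormal basis of `Σ`. -/
def orthRicci {V ι : Type*} [Fintype ι] (R : V → V → V → V → ℂ) (E : ι → V) (v : V) : ℂ :=
  ∑ j, R v v (E j) (E j) - R v v v v

namespace IsKahlerCurvatureTensor

variable {V : Type*} [AddCommGroup V] [Module ℂ V] {R : V → V → V → V → ℂ}

theorem map_sub₁ (hR : IsKahlerCurvatureTensor R) (x x' y z w : V) :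
    R (x - x') y z w = R x y z w - R x' y z w := by
  rw [sub_eq_add_neg, hR.map_add₁, ← neg_one_smul ℂ x', hR.map_smul₁]; ring

theorem map_sub₂ (hR : IsKahlerCurvatureTensor R) (x y y' z w : V) :
    R x (y - y') z w = R x y z w - R x y' z w := by
  rw [sub_eq_add_neg, hR.map_add₂, ← neg_one_smul ℂ y', hR.map_smul₂, map_neg, map_one]; ring

theorem map_sub₃ (hR : IsKahlerCurvatureTensor R) (x y z z' w : V) :
    R x y (z - z') w = R x y z w - R x y z' w := by
  rw [sub_eq_add_neg, hR.map_add₃, ← neg_one_smul ℂ z', hR.map_smul₃]; ring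

theorem map_sub₄ (hR : IsKahlerCurvatureTensor R) (x y z w w' : V) :
    R x y z (w - w') = R x y z w - R x y z w' := by
  rw [sub_eq_add_neg, hR.map_add₄, ← neg_one_smul ℂ w', hR.map_smul₄, map_neg, map_one]; ring

theorem apply_swap_pairs (hR : IsKahlerCurvatureTensor R) (x y : V) :
    R y y x x = R x x y y := by
  rw [hR.symm₁₃, hR.symm₂₄]

theorem map_ofReal_smul_ofReal_smul (hR : IsKahlerCurvatureTensor R) (t : ℝ) (v z w : V) :
    R ((t : ℂ) • v) ((t : ℂ) • v) z w = (t : ℂ) ^ 2 * R v v z w := by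
  rw [hR.map_smul₁, hR.map_smul₂, Complex.conj_ofReal]; ring

theorem apply_add_add_add_apply_sub_sub (hR : IsKahlerCurvatureTensor R) (x y z w : V) :
    R (x + y) (x + y) z w + R (x - y) (x - y) z w = 2 * (R x x z w + R y y z w) := by
  simp only [hR.map_add₁, hR.map_add₂, hR.map_sub₁, hR.map_sub₂]; ring

theorem quartic_add_add_quartic_sub (hR : IsKahlerCurvatureTensor R) (x y : V) :
    R (x + y) (x + y) (x + y) (x + y) + R (x - y) (x - y) (x - y) (x - y) =
      2 * (R x x x x + R y y y y + 4 * R x x y y + R x y x y + R y x y x) := by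
  have hyyxx := hR.apply_swap_pairs x y
  have hxyyx : R x y y x = R x x y y := hR.symm₂₄ _ _ _ _
  have hyxxy : R y x x y = R x x y y := by rw [hR.symm₂₄, hyyxx]
  simp only [hR.map_add₁, hR.map_add₂, hR.map_add₃, hR.map_add₄,
    hR.map_sub₁, hR.map_sub₂, hR.map_sub₃, hR.map_sub₄]
  linear_combination 2 * hyyxx + 2 * hxyyx + 2 * hyxxy

theorem orthRicci_ofReal_smul (hR : IsKahlerCurvatureTensor R) {ι : Type*} [Fintype ι]
    (E : ι → V) (t : ℝ) (v : V) :
    orthRicci R E ((t : ℂ) • v) =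
      (t : ℂ) ^ 2 * ∑ j, R v v (E j) (E j) - (t : ℂ) ^ 4 * R v v v v := by
  simp only [orthRicci, hR.map_ofReal_smul_ofReal_smul, ← Finset.mul_sum]
  rw [hR.map_smul₃, hR.map_smul₄, Complex.conj_ofReal]; ring

theorem two_mul_orthRicci_add_orthRicci (hR : IsKahlerCurvatureTensor R) (e : Fin 3 → V) :
    2 * (orthRicci R e ((((√2)⁻¹ : ℝ) : ℂ) • (e 0 + e 1)) +
        orthRicci R e ((((√2)⁻¹ : ℝ) : ℂ) • (e 0 - e 1))) =
      R (e 0) (e 0) (e 0) (e 0) + R (e 1) (e 1) (e 1) (e 1)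
        - R (e 0) (e 1) (e 0) (e 1) - R (e 1) (e 0) (e 1) (e 0)
        + 2 * (R (e 0) (e 0) (e 2) (e 2) + R (e 1) (e 1) (e 2) (e 2)) := by
  have ht : ((((√2)⁻¹ : ℝ) : ℂ)) ^ 2 = 1 / 2 := by
    rw [← Complex.ofReal_pow, inv_pow, Real.sq_sqrt zero_le_two]; norm_num
  have ht4 : ((((√2)⁻¹ : ℝ) : ℂ)) ^ 4 = 1 / 4 := by
    rw [show 4 = 2 * 2 from rfl, pow_mul, ht]; norm_num
  rw [hR.orthRicci_ofReal_smul, hR.orthRicci_ofReal_smul, ht, ht4]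
  have hquad := fun j => hR.apply_add_add_add_apply_sub_sub (e 0) (e 1) (e j) (e j)
  simp only [Fin.sum_univ_three] at hquad ⊢
  linear_combination hquad 0 + hquad 1 + hquad 2
    - hR.quartic_add_add_quartic_sub (e 0) (e 1) / 2 + 2 * hR.apply_swap_pairs (e 0) (e 1)

end IsKahlerCurvatureTensor

theorem norm_add_eq_sqrt_two_of_inner_eq_zero {E : Type*} [NormedAddCommGroup E]
    [InnerProductSpace ℂ E] {x y : E} (hx : ‖x‖ = 1) (hy : ‖y‖ = 1) (h : inner ℂ x y = 0) :
    ‖x + y‖ = √2 := by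
  have := norm_add_sq_eq_norm_sq_add_norm_sq_of_inner_eq_zero x y h
  rw [hx, hy] at this
  rw [← Real.sqrt_mul_self (norm_nonneg _), this]; norm_num

theorem Ric3_inequality_general
    {V : Type*} [NormedAddCommGroup V] [InnerProductSpace ℂ V]
    (R : V → V → V → V → ℂ) (hR : IsKahlerCurvatureTensor R) (φ : ℝ)
    (hRic : ∀ K : Submodule ℂ V, Module.finrank ℂ K = 3 →
      ∀ E : Fin 3 → V, Orthonormal ℂ E → (∀ j, E j ∈ K) →
      ∀ v ∈ K, ‖v‖ = 1 →
        φ ≤ ((∑ j : Fin 3, R v v (E j) (E j)) - R v v v v).re)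
    (e : Fin 3 → V) (he : Orthonormal ℂ e) :
    4 * φ ≤ (R (e 0) (e 0) (e 0) (e 0) + R (e 1) (e 1) (e 1) (e 1)
      - R (e 0) (e 1) (e 0) (e 1) - R (e 1) (e 0) (e 1) (e 0)
      + 2 * (R (e 0) (e 0) (e 2) (e 2) + R (e 1) (e 1) (e 2) (e 2))).re := by
  set K := Submodule.span ℂ (Set.range e)
  have hK : Module.finrank ℂ K = 3 := by
    simp [K, finrank_span_eq_card he.linearIndependent]
  have he_mem (j : Fin 3) : e j ∈ K := Submodule.subset_span (Set.mem_range_self j)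
  have h01 : inner ℂ (e 0) (e 1) = 0 := he.2 (by decide)
  have hRic_scaled (w : V) (hw : w ∈ K) (hnorm : ‖w‖ = √2) :
      φ ≤ (orthRicci R e ((((√2)⁻¹ : ℝ) : ℂ) • w)).re := by
    refine hRic K hK e he he_mem _ (K.smul_mem _ hw) ?_
    rw [norm_smul, hnorm, Complex.norm_real, Real.norm_of_nonneg (by positivity),
      inv_mul_cancel₀ (by positivity)]
  have hplus := hRic_scaled (e 0 + e 1) (K.add_mem (he_mem 0) (he_mem 1))
    (norm_add_eq_sqrt_two_of_inner_eq_zero (he.1 0) (he.1 1) h01)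
  have hminus := hRic_scaled (e 0 - e 1) (K.sub_mem (he_mem 0) (he_mem 1))
    (by simpa [sub_eq_add_neg] using
      norm_add_eq_sqrt_two_of_inner_eq_zero (he.1 0) (by simpa using he.1 1) (by simp [h01]))
  rw [← hR.two_mul_orthRicci_add_orthRicci e]
  simp only [Complex.mul_re, Complex.add_re, Complex.re_ofNat, Complex.im_ofNat, zero_mul, sub_zero]
  linarith

/-- **Inequality (eq:Ric3) in the proof of Theorem 1.** Let `V` be a complex inner
product space of dimension `n ≥ 3`, `R` a Kähler curvature-type tensor and `φ ∈ ℝ`.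
If `Ric_3^⊥ ≥ φ` pointwise, then for every orthonormal triple `(e₁, e₂, e_l)`,
`R_{11̄11̄} + R_{22̄22̄} − R_{12̄12̄} − R_{21̄21̄} + 2(R_{11̄ll̄} + R_{22̄ll̄}) ≥ 4φ`. -/
theorem Ric3_inequality
    {V : Type*} [NormedAddCommGroup V] [InnerProductSpace ℂ V] [FiniteDimensional ℂ V]
    (hn : 3 ≤ Module.finrank ℂ V)
    (R : V → V → V → V → ℂ) (hR : IsKahlerCurvatureTensor R) (φ : ℝ)
    (hRic : ∀ K : Submodule ℂ V, Module.finrank ℂ K = 3 →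
      ∀ E : Fin 3 → V, Orthonormal ℂ E → (∀ j, E j ∈ K) →
      ∀ v ∈ K, ‖v‖ = 1 →
        φ ≤ ((∑ j : Fin 3, R v v (E j) (E j)) - R v v v v).re)
    (e : Fin 3 → V) (he : Orthonormal ℂ e) :
    4 * φ ≤ (R (e 0) (e 0) (e 0) (e 0) + R (e 1) (e 1) (e 1) (e 1)
      - R (e 0) (e 1) (e 0) (e 1) - R (e 1) (e 0) (e 1) (e 0)
      + 2 * (R (e 0) (e 0) (e 2) (e 2) + R (e 1) (e 1) (e 2) (e 2))).re :=
  Ric3_inequality_general R hR φ hRic e he
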